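/- arXiv:2311.00510 — 2 statements merged into one kernel-verified Lean document; each statement's English description precedes it below -/
import Mathlib

section
/- The set Z₃ = integers modulo 3 with operations x ▷̲ˢ y = 2x + 2y, x ▷̄ˢ y = x, x ▷̲ᵐ y = 2x, x ▷̄ᵐ y = 2x is an mc-biquandle. -/
def mcTriples : Set (Bool × Bool × Bool) :=
  {(true, true, true), (true, false, false), (false, true, false),
   (false, false, true), (false, false, false)}

structure IsMcBiquandle (X : Type*) (u o : Bool → X → X → X) : Prop where
  idem : ∀ x : X, o true x x = u true x x
  bij_alpha : ∀ (j : Bool) (y : X), Function.Bijective (fun x => u j x y)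
  bij_beta : ∀ (j : Bool) (y : X), Function.Bijective (fun x => o j x y)
  bij_S : ∀ j : Bool,
    Function.Bijective (fun p : X × X => (o j p.2 p.1, u j p.1 p.2))
  exch : ∀ j k l : Bool, (j, k, l) ∈ mcTriples → ∀ x y z : X,
    o l (o k x y) (o j z y) = o k (o l x z) (u j y z) ∧
    o j (u l x y) (u k z y) = u l (o j x z) (o k y z) ∧
    u j (u k x y) (u l z y) = u k (u j x z) (o l y z)

/-- ℤ/3 with `x ▷̲ˢ y = 2x+2y`, `x ▷̄ˢ y = x`, `x ▷̲ᵐ y = 2x`, `x ▷̄ᵐ y = 2x`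
is an mc-biquandle. -/
theorem zmod3_mc_biquandle :
    IsMcBiquandle (ZMod 3)
      (fun j x y => if j then 2 * x + 2 * y else 2 * x)
      (fun j x _y => if j then x else 2 * x) := by
  constructor
  · decide
  · decide
  · decide
  · decide
  · intro j k l h x y z
    fin_cases j <;> fin_cases k <;> fin_cases l <;>
      first
      | (revert x y z; decide)
      | (simp [mcTriples] at h)
end

section
/- The three-element structure on {1,2,3} given by the tables: ▷̲ˢ constant in the second argument with rows (1,1,1),(2,2,2),(3,3,3); ▷̄ˢ with table 1▷̄ˢ2 = 3, 3▷̄ˢ2 = 1, and x▷̄ˢy = x otherwise; ▷̲ᵐ with 1▷̲ᵐy = 3, 2▷̲ᵐy = 2, 3▷̲ᵐy = 1 for all y; and x ▷̄ᵐ y = x for all x, y, is an mc-biquandle. -/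
/-- Elements 1,2,3 of the example are encoded as `0,1,2 : Fin 3`. -/
theorem example_three_element_mc_biquandle :
    IsMcBiquandle (Fin 3)
      (fun j x _y => if j then x else ![2, 1, 0] x)
      (fun j x y => if j then (if y = 1 then ![2, 1, 0] x else x) else x) :=
  by
  refine ⟨by decide, by decide, by decide, by decide, ?_⟩
  intro j k l hm x y z
  revert x y z
  simp only [mcTriples, Set.mem_insert_iff, Set.mem_singleton_iff, Prod.mk.injEq] at hm
  rcases hm with ⟨h1,h2,h3⟩|⟨h1,h2,h3⟩|⟨h1,h2,h3⟩|⟨h1,h2,h3⟩|⟨h1,h2,h3⟩ <;>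
    subst h1 <;> subst h2 <;> subst h3 <;> decide
end
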